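/- Let $p \in [1,2]$ and $A \in \mathbb{R}^{n \times d}$ with full column rank. If the leverage scores of $A$ are all at most $C > 0$, then the $\ell_p$ Lewis weights of $A$ are all at most $C$. -/

import Mathlib

/-! Let `c` be the largest Lewis weight. As `1 - 2/p ≤ 0`, every diagonal entry `w_t^(1-2/p)` is
at least `c^(1-2/p)`, so `Aᵀ W^(1-2/p) A ≥ c^(1-2/p) AᵀA` as quadratic forms. Inversion reverses
this order, and the fixed-point equation at the maximising row gives
`c ≤ (c^(2/p-1) C)^(p/2) = c^(1-p/2) C^(p/2)`, that is `c ≤ C`. -/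

open Matrix Filter

namespace Matrix

variable {m n : Type*}

section PosDef

variable [Fintype n] [DecidableEq n]

lemma PosDef.two_mul_dotProduct_sub_le {N : Matrix n n ℝ} (hN : N.PosDef) (x y : n → ℝ) :
    2 * (x ⬝ᵥ y) - y ⬝ᵥ N *ᵥ y ≤ x ⬝ᵥ N⁻¹ *ᵥ x := by
  set u := N⁻¹ *ᵥ x
  have hNu : N *ᵥ u = x := by
    rw [mulVec_mulVec, mul_nonsing_inv _ ((isUnit_iff_isUnit_det N).mp hN.isUnit), one_mulVec]
  have hsymm : u ⬝ᵥ N *ᵥ y = y ⬝ᵥ N *ᵥ u := by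
    rw [dotProduct_mulVec, ← mulVec_transpose, ← conjTranspose_eq_transpose_of_trivial,
      hN.isHermitian.eq, dotProduct_comm]
  -- completing the square: `0 ≤ (y - u) ⬝ᵥ N *ᵥ (y - u)`
  have hsq := hN.posSemidef.dotProduct_mulVec_nonneg (y - u)
  simp only [star_trivial, mulVec_sub, dotProduct_sub, sub_dotProduct, hNu] at hsq
  rw [hsymm, hNu, dotProduct_comm y x, dotProduct_comm u x] at hsq
  linarith

lemma PosDef.dotProduct_inv_mulVec_le_of_dotProduct_mulVec_le {M N : Matrix n n ℝ}
    (hM : M.PosDef) (hN : N.PosDef) (hNM : ∀ y, y ⬝ᵥ N *ᵥ y ≤ y ⬝ᵥ M *ᵥ y) (x : n → ℝ) :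
    x ⬝ᵥ M⁻¹ *ᵥ x ≤ x ⬝ᵥ N⁻¹ *ᵥ x := by
  set y := M⁻¹ *ᵥ x
  have hMy : M *ᵥ y = x := by
    rw [mulVec_mulVec, mul_nonsing_inv _ ((isUnit_iff_isUnit_det M).mp hM.isUnit), one_mulVec]
  calc x ⬝ᵥ M⁻¹ *ᵥ x = 2 * (x ⬝ᵥ y) - y ⬝ᵥ M *ᵥ y := by rw [hMy, dotProduct_comm y x]; ring
    _ ≤ 2 * (x ⬝ᵥ y) - y ⬝ᵥ N *ᵥ y := by linarith [hNM y]
    _ ≤ x ⬝ᵥ N⁻¹ *ᵥ x := hN.two_mul_dotProduct_sub_le x y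

end PosDef

lemma mulVec_injective_of_rank_eq_card [Fintype n] {K : Type*} [Field K] {A : Matrix m n K}
    (hA : A.rank = Fintype.card n) : Function.Injective A.mulVec := by
  rw [mulVec_injective_iff, linearIndependent_iff_card_eq_finrank_span, ← hA,
    rank_eq_finrank_span_cols]
  rfl

variable [Fintype m] [Fintype n] [DecidableEq m]

lemma dotProduct_transpose_mul_diagonal_mul_mulVec (A : Matrix m n ℝ) (v : m → ℝ)
    (y : n → ℝ) : y ⬝ᵥ (Aᵀ * diagonal v * A) *ᵥ y = ∑ t, v t * (A *ᵥ y) t ^ 2 := by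
  rw [← mulVec_mulVec, ← mulVec_mulVec, dotProduct_mulVec, vecMul_transpose]
  simp only [dotProduct, mulVec_diagonal]
  exact Finset.sum_congr rfl fun t _ => by ring

lemma posDef_transpose_mul_diagonal_mul {A : Matrix m n ℝ} (hA : Function.Injective A.mulVec)
    {v : m → ℝ} (hv : ∀ t, 0 < v t) : (Aᵀ * diagonal v * A).PosDef :=
  (posDef_diagonal_iff.mpr hv).conjTranspose_mul_mul_same hA

variable [DecidableEq n]

lemma dotProduct_inv_transpose_mul_diagonal_mul_le {A : Matrix m n ℝ}
    (hA : Function.Injective A.mulVec) {b : ℝ} (hb : 0 < b) {v : m → ℝ} (hbv : ∀ t, b ≤ v t)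
    (x : n → ℝ) :
    x ⬝ᵥ (Aᵀ * diagonal v * A)⁻¹ *ᵥ x ≤ b⁻¹ * (x ⬝ᵥ (Aᵀ * A)⁻¹ *ᵥ x) := by
  have hAA : (Aᵀ * A).PosDef := by
    simpa using posDef_transpose_mul_diagonal_mul hA (v := 1) fun _ => one_pos
  have hscale : Aᵀ * diagonal (fun _ : m => b) * A = b • (Aᵀ * A) := by
    rw [← smul_one_eq_diagonal, Matrix.mul_smul, Matrix.mul_one, Matrix.smul_mul]
  have hinv : (b • (Aᵀ * A))⁻¹ = b⁻¹ • (Aᵀ * A)⁻¹ := by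
    have := invertibleOfNonzero hb.ne'
    rw [Matrix.inv_smul _ b ((isUnit_iff_isUnit_det _).mp hAA.isUnit), invOf_eq_inv]
  have hle : ∀ y, y ⬝ᵥ (Aᵀ * diagonal (fun _ : m => b) * A) *ᵥ y
      ≤ y ⬝ᵥ (Aᵀ * diagonal v * A) *ᵥ y := fun y => by
    simp only [dotProduct_transpose_mul_diagonal_mul_mulVec]
    gcongr with t
    exact hbv t
  have hcmp := (posDef_transpose_mul_diagonal_mul hA fun t => hb.trans_le (hbv t))
    |>.dotProduct_inv_mulVec_le_of_dotProduct_mulVec_le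
      (posDef_transpose_mul_diagonal_mul hA fun _ => hb) hle x
  rwa [hscale, hinv, smul_mulVec, dotProduct_smul, smul_eq_mul] at hcmp

/-- The Lewis weights are the fixed points of `lewisMap p A`. -/
noncomputable def lewisMap (p : ℝ) (A : Matrix m n ℝ) (w : m → ℝ) (i : m) : ℝ :=
  (A i ⬝ᵥ (Aᵀ * diagonal (fun t => w t ^ (1 - 2 / p)) * A)⁻¹ *ᵥ A i) ^ (p / 2)

lemma lewisMap_le {p : ℝ} (hp0 : 0 < p) (hp2 : p ≤ 2) {A : Matrix m n ℝ}
    (hA : Function.Injective A.mulVec) {C : ℝ} (hC : 0 ≤ C)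
    (hlev : ∀ i, A i ⬝ᵥ (Aᵀ * A)⁻¹ *ᵥ A i ≤ C) {w : m → ℝ} (hw : ∀ t, 0 < w t) {c : ℝ}
    (hc : 0 < c) (hwc : ∀ t, w t ≤ c) (i : m) :
    lewisMap p A w i ≤ c ^ (1 - p / 2) * C ^ (p / 2) := by
  have hexp : 1 - 2 / p ≤ 0 := by
    rw [sub_nonpos, le_div_iff₀ hp0]
    linarith
  have hb : 0 < c ^ (1 - 2 / p) := Real.rpow_pos_of_pos hc _
  have hquad := dotProduct_inv_transpose_mul_diagonal_mul_le hA hb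
    (fun t => Real.rpow_le_rpow_of_nonpos (hw t) (hwc t) hexp) (A i)
  have hnonneg : 0 ≤ A i ⬝ᵥ (Aᵀ * diagonal (fun t => w t ^ (1 - 2 / p)) * A)⁻¹ *ᵥ A i := by
    simpa using (posDef_transpose_mul_diagonal_mul hA fun t => Real.rpow_pos_of_pos (hw t) _)
      |>.inv.posSemidef.dotProduct_mulVec_nonneg (A i)
  calc lewisMap p A w i ≤ ((c ^ (1 - 2 / p))⁻¹ * C) ^ (p / 2) := by
        refine Real.rpow_le_rpow hnonneg (hquad.trans ?_) (by positivity)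
        exact mul_le_mul_of_nonneg_left (hlev i) (by positivity)
    _ = c ^ (1 - p / 2) * C ^ (p / 2) := by
        rw [← Real.rpow_neg hc.le, Real.mul_rpow (by positivity) hC, ← Real.rpow_mul hc.le]
        congr 2
        field_simp
        ring

end Matrix

lemma Real.le_of_le_rpow_one_sub_mul_rpow {c C θ : ℝ} (hc : 0 < c) (hC : 0 ≤ C) (hθ : 0 < θ)
    (h : c ≤ c ^ (1 - θ) * C ^ θ) : c ≤ C := by
  have hcθ : c ^ (1 - θ) * c ^ θ = c := by
    rw [← Real.rpow_add hc, sub_add_cancel, Real.rpow_one]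
  rw [← Real.rpow_le_rpow_iff hc.le hC hθ,
    ← mul_le_mul_iff_right₀ (Real.rpow_pos_of_pos hc (1 - θ)), hcθ]
  exact h

theorem stmt_4_general {n d : ℕ} (p : ℝ) (hp1 : 1 ≤ p) (hp2 : p ≤ 2)
    (A : Matrix (Fin n) (Fin d) ℝ) (hA : A.rank = d)
    (C : ℝ) (hC : 0 < C)
    (hlev : ∀ i, A i ⬝ᵥ ((Aᵀ * A)⁻¹).mulVec (A i) ≤ C)
    (w : Fin n → ℝ) (hwpos : ∀ i, 0 < w i)
    (hfix : ∀ i, w i =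
      (A i ⬝ᵥ ((Aᵀ * Matrix.diagonal (fun t => w t ^ (1 - 2 / p)) * A)⁻¹).mulVec (A i))
        ^ (p / 2)) :
    ∀ i, w i ≤ C := by
  intro i
  have hp0 : 0 < p := by linarith
  have hinj := mulVec_injective_of_rank_eq_card (by rwa [Fintype.card_fin])
  obtain ⟨j, -, hj⟩ := Finset.univ.exists_max_image w ⟨i, Finset.mem_univ i⟩
  have hmax : ∀ t, w t ≤ w j := fun t => hj t (Finset.mem_univ t)
  have hself : w j ≤ w j ^ (1 - p / 2) * C ^ (p / 2) :=
    (hfix j).trans_le (lewisMap_le hp0 hp2 hinj hC.le hlev hwpos (hwpos j) hmax j)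
  exact (hmax i).trans
    (Real.le_of_le_rpow_one_sub_mul_rpow (hwpos j) hC.le (by positivity) hself)

/-- If the leverage scores of `A` are all at most `C`, then the `ℓ_p` Lewis weights of `A`
(obtained as the limit of the Lewis weight iteration started at the identity) are all at
most `C`. -/
theorem stmt_4 {n d : ℕ} (p : ℝ) (hp1 : 1 ≤ p) (hp2 : p ≤ 2)
    (A : Matrix (Fin n) (Fin d) ℝ) (hA : A.rank = d)
    (C : ℝ) (hC : 0 < C)
    (hlev : ∀ i, A i ⬝ᵥ ((Aᵀ * A)⁻¹).mulVec (A i) ≤ C)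
    (W : ℕ → Fin n → ℝ)
    (hW0 : ∀ i, W 0 i = 1)
    (hWiter : ∀ j i, W (j + 1) i =
      (A i ⬝ᵥ ((Aᵀ * Matrix.diagonal (fun t => W j t ^ (1 - 2 / p)) * A)⁻¹).mulVec (A i))
        ^ (p / 2))
    (w : Fin n → ℝ) (hwpos : ∀ i, 0 < w i) (hw1 : ∀ i, w i ≤ 1)
    (hfix : ∀ i, w i =
      (A i ⬝ᵥ ((Aᵀ * Matrix.diagonal (fun t => w t ^ (1 - 2 / p)) * A)⁻¹).mulVec (A i))
        ^ (p / 2))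
    (hconv : ∀ i, Tendsto (fun j => W j i) atTop (nhds (w i))) :
    ∀ i, w i ≤ C :=
  stmt_4_general p hp1 hp2 A hA C hC hlev w hwpos hfix
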